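/- For every n ≥ 1 the following identity of real polynomials holds: x⁴ · Σ_{k=0}^{2n} (2^k/k!) · Hₖ‴(0) · Hₖ(x) = (2·(−1)^n/n!) · ((3 − 6n·x²)·H₂ₙ₊₁(x) − (2n+1)·(3x − 2n·x³)·H₂ₙ(x)). Equivalently, the derivated Hermite kernel K₂ₙ^{(0,3)}(x,0) = Σ_{k=0}^{2n} Hₖ(x)Hₖ‴(0)/‖Hₖ‖² equals (2·(−1)^n/(√π·n!)) · ((3 − 6n·x²)·H₂ₙ₊₁(x) − (2n+1)·(3 − 2n·x²)·x·H₂ₙ(x))/x⁴. -/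

import Mathlib

open Polynomial Finset

/-!
The monic Hermite polynomials form an Appell sequence, `H'ₙ₊₁ = (n+1)·Hₙ`, so
`2ᵏ⁺³/(k+3)!·H‴ₖ₊₃(0) = 8·2ᵏ/k!·Hₖ(0)`. By the three-term recurrence `Hₖ(0)` vanishes for odd `k`,
and `2²ᵐ/(2m)!·H₂ₘ(0) = (-1)ᵐ/m!`. Hence the coefficient `2ᵏ/k!·H‴ₖ(0)` is `0` for even `k` and
`-8m(-1)ᵐ/m!` for `k = 2m+1`, and the closed form follows by induction on `n`, rewriting `H₂ₙ₊₃`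
and `H₂ₙ₊₂` through `H₂ₙ₊₁` and `H₂ₙ`. The kernel form is the same identity divided by `√π·x⁴`,
since `1/‖Hₖ‖² = 2ᵏ/(√π·k!)`.
-/

/-- The monic Hermite polynomials: `H₀ = 1`, `H₁ = X`,
`H_{n+2} = X·H_{n+1} − ((n+1)/2)·Hₙ`. -/
noncomputable def hermiteM : ℕ → Polynomial ℝ
  | 0 => 1
  | 1 => X
  | n + 2 => X * hermiteM (n + 1) - C (((n : ℝ) + 1) / 2) * hermiteM n

/-- The squared norm of the `n`-th monic Hermite polynomial: `√π · n! / 2ⁿ`. -/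
noncomputable def hermiteNormSq (n : ℕ) : ℝ :=
  Real.sqrt Real.pi * n.factorial / 2 ^ n

lemma hermiteM_add_two (k : ℕ) :
    hermiteM (k + 2) = X * hermiteM (k + 1) - C (((k : ℝ) + 1) / 2) * hermiteM k := by
  rw [hermiteM]

@[simp]
lemma eval_hermiteM_add_two (k : ℕ) (x : ℝ) :
    (hermiteM (k + 2)).eval x =
      x * (hermiteM (k + 1)).eval x - ((k : ℝ) + 1) / 2 * (hermiteM k).eval x := by
  simp [hermiteM_add_two]

lemma derivative_hermiteM_succ :
    ∀ n : ℕ, derivative (hermiteM (n + 1)) = C ((n : ℝ) + 1) * hermiteM n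
  | 0 => by simp [hermiteM]
  | 1 => by
    refine Polynomial.funext fun x => ?_
    simp [hermiteM]
    ring
  | n + 2 => by
    rw [hermiteM_add_two (n + 1), derivative_sub, derivative_mul, derivative_X,
      derivative_C_mul, derivative_hermiteM_succ (n + 1), derivative_hermiteM_succ n]
    refine Polynomial.funext fun x => ?_
    simp
    ring

lemma derivative_three_hermiteM_add_three (k : ℕ) :
    derivative (derivative (derivative (hermiteM (k + 3)))) =
      C (((k : ℝ) + 3) * ((k : ℝ) + 2) * ((k : ℝ) + 1)) * hermiteM k := by
  simp only [derivative_hermiteM_succ, derivative_C_mul, ← mul_assoc, ← C_mul]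
  push_cast
  ring_nf

lemma eval_hermiteM_odd_zero : ∀ m : ℕ, (hermiteM (2 * m + 1)).eval 0 = 0
  | 0 => by simp [hermiteM]
  | m + 1 => by
    rw [show 2 * (m + 1) + 1 = 2 * m + 1 + 2 by ring, eval_hermiteM_add_two,
      eval_hermiteM_odd_zero m]
    ring

lemma two_pow_div_factorial_mul_eval_hermiteM_even_zero :
    ∀ m : ℕ, (2 : ℝ) ^ (2 * m) / (2 * m).factorial * (hermiteM (2 * m)).eval 0 =
      (-1) ^ m / m.factorial
  | 0 => by simp [hermiteM]
  | m + 1 => by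
    have hstep :
        (2 : ℝ) ^ (2 * (m + 1)) / (2 * (m + 1)).factorial * (hermiteM (2 * (m + 1))).eval 0 =
          -((m : ℝ) + 1)⁻¹ *
            ((2 : ℝ) ^ (2 * m) / (2 * m).factorial * (hermiteM (2 * m)).eval 0) := by
      rw [show 2 * (m + 1) = 2 * m + 2 by ring, eval_hermiteM_add_two, Nat.factorial_succ,
        Nat.factorial_succ]
      push_cast
      field_simp
      ring
    rw [hstep, two_pow_div_factorial_mul_eval_hermiteM_even_zero m, Nat.factorial_succ]
    push_cast
    field_simp
    ring

noncomputable def hermiteKernelCoeff (k : ℕ) : ℝ :=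
  (2 : ℝ) ^ k / k.factorial * (derivative (derivative (derivative (hermiteM k)))).eval 0

lemma hermiteKernelCoeff_add_three (k : ℕ) :
    hermiteKernelCoeff (k + 3) = 8 * ((2 : ℝ) ^ k / k.factorial * (hermiteM k).eval 0) := by
  rw [hermiteKernelCoeff, derivative_three_hermiteM_add_three, eval_mul, eval_C,
    Nat.factorial_succ, Nat.factorial_succ, Nat.factorial_succ]
  push_cast
  field_simp
  ring

lemma hermiteKernelCoeff_even : ∀ n : ℕ, hermiteKernelCoeff (2 * n) = 0
  | 0 => by simp [hermiteKernelCoeff, hermiteM]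
  | 1 => by simp [hermiteKernelCoeff, hermiteM]
  | m + 2 => by
    rw [show 2 * (m + 2) = 2 * m + 1 + 3 by ring, hermiteKernelCoeff_add_three,
      eval_hermiteM_odd_zero, mul_zero, mul_zero]

lemma hermiteKernelCoeff_odd :
    ∀ n : ℕ, hermiteKernelCoeff (2 * n + 1) = -8 * n * (-1) ^ n / n.factorial
  | 0 => by simp [hermiteKernelCoeff, hermiteM]
  | m + 1 => by
    rw [show 2 * (m + 1) + 1 = 2 * m + 3 by ring, hermiteKernelCoeff_add_three,
      two_pow_div_factorial_mul_eval_hermiteM_even_zero, Nat.factorial_succ]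
    push_cast
    field_simp
    ring

lemma pow_four_mul_sum_hermiteKernelCoeff : ∀ (n : ℕ) (x : ℝ),
    x ^ 4 * ∑ k ∈ range (2 * n + 1), hermiteKernelCoeff k * (hermiteM k).eval x =
      2 * (-1) ^ n / n.factorial *
        ((3 - 6 * n * x ^ 2) * (hermiteM (2 * n + 1)).eval x -
          (2 * n + 1) * (3 * x - 2 * n * x ^ 3) * (hermiteM (2 * n)).eval x)
  | 0, x => by simp [hermiteKernelCoeff, hermiteM]
  | n + 1, x => by
    have hH₂ : (hermiteM (2 * (n + 1))).eval x =
        x * (hermiteM (2 * n + 1)).eval x - (2 * n + 1) / 2 * (hermiteM (2 * n)).eval x := by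
      rw [show 2 * (n + 1) = 2 * n + 2 by ring, eval_hermiteM_add_two]
      push_cast
      rfl
    have hH₃ : (hermiteM (2 * (n + 1) + 1)).eval x =
        x * (hermiteM (2 * (n + 1))).eval x - (n + 1) * (hermiteM (2 * n + 1)).eval x := by
      rw [show 2 * (n + 1) + 1 = 2 * n + 1 + 2 by ring, eval_hermiteM_add_two]
      push_cast
      ring_nf
    rw [show 2 * (n + 1) + 1 = 2 * n + 1 + 1 + 1 by ring, sum_range_succ, sum_range_succ,
      mul_add, mul_add, pow_four_mul_sum_hermiteKernelCoeff n x, hermiteKernelCoeff_odd,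
      show 2 * n + 1 + 1 = 2 * (n + 1) by ring, hermiteKernelCoeff_even, hH₃, hH₂,
      Nat.factorial_succ]
    push_cast
    field_simp
    ring

theorem stmt17_general (n : ℕ) :
    (X ^ 4 * ∑ k ∈ range (2 * n + 1),
        C ((2 : ℝ) ^ k / k.factorial *
          (derivative (derivative (derivative (hermiteM k)))).eval 0) * hermiteM k =
      C (2 * (-1 : ℝ) ^ n / n.factorial) *
        ((C (3 : ℝ) - C (6 * (n : ℝ)) * X ^ 2) * hermiteM (2 * n + 1) -
          C (2 * (n : ℝ) + 1) * (C (3 : ℝ) * X - C (2 * (n : ℝ)) * X ^ 3) *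
            hermiteM (2 * n))) ∧
    (∀ x : ℝ, x ≠ 0 →
      ∑ k ∈ range (2 * n + 1),
          (hermiteM k).eval x *
            (derivative (derivative (derivative (hermiteM k)))).eval 0 / hermiteNormSq k =
        2 * (-1 : ℝ) ^ n / (Real.sqrt Real.pi * n.factorial) *
          (((3 - 6 * (n : ℝ) * x ^ 2) * (hermiteM (2 * n + 1)).eval x -
            (2 * (n : ℝ) + 1) * (3 - 2 * (n : ℝ) * x ^ 2) * x * (hermiteM (2 * n)).eval x) /
              x ^ 4)) := by
  refine ⟨Polynomial.funext fun x => ?_, fun x hx => ?_⟩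
  · have h := pow_four_mul_sum_hermiteKernelCoeff n x
    simp only [hermiteKernelCoeff] at h
    simp only [eval_mul, eval_pow, eval_X, eval_finsetSum, eval_C, eval_sub]
    linear_combination h
  · have hπ : Real.sqrt Real.pi ≠ 0 := (Real.sqrt_pos.2 Real.pi_pos).ne'
    have hsum : ∑ k ∈ range (2 * n + 1), (hermiteM k).eval x *
          (derivative (derivative (derivative (hermiteM k)))).eval 0 / hermiteNormSq k =
        (Real.sqrt Real.pi)⁻¹ *
          ∑ k ∈ range (2 * n + 1), hermiteKernelCoeff k * (hermiteM k).eval x := by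
      rw [mul_sum]
      refine sum_congr rfl fun k _ => ?_
      rw [hermiteNormSq, hermiteKernelCoeff]
      field_simp
    have h := pow_four_mul_sum_hermiteKernelCoeff n x
    rw [div_mul_eq_mul_div, eq_div_iff (by positivity)] at h
    rw [hsum]
    field_simp
    linear_combination h

theorem stmt17 (n : ℕ) (hn : 1 ≤ n) :
    (X ^ 4 * ∑ k ∈ range (2 * n + 1),
        C ((2 : ℝ) ^ k / k.factorial *
          (derivative (derivative (derivative (hermiteM k)))).eval 0) * hermiteM k =
      C (2 * (-1 : ℝ) ^ n / n.factorial) *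
        ((C (3 : ℝ) - C (6 * (n : ℝ)) * X ^ 2) * hermiteM (2 * n + 1) -
          C (2 * (n : ℝ) + 1) * (C (3 : ℝ) * X - C (2 * (n : ℝ)) * X ^ 3) *
            hermiteM (2 * n))) ∧
    (∀ x : ℝ, x ≠ 0 →
      ∑ k ∈ range (2 * n + 1),
          (hermiteM k).eval x *
            (derivative (derivative (derivative (hermiteM k)))).eval 0 / hermiteNormSq k =
        2 * (-1 : ℝ) ^ n / (Real.sqrt Real.pi * n.factorial) *
          (((3 - 6 * (n : ℝ) * x ^ 2) * (hermiteM (2 * n + 1)).eval x -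
            (2 * (n : ℝ) + 1) * (3 - 2 * (n : ℝ) * x ^ 2) * x * (hermiteM (2 * n)).eval x) /
              x ^ 4)) :=
  stmt17_general n
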